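/- Let N^{11}_{i→j}(θ) denote the (non-trace-preserving) map on mode i defined by injecting a single photon |1⟩_j into the ancilla mode, applying the beam splitter U_{ij}(θ), and projecting mode i onto ⟨1|_i. Then for every Fock state |n⟩, N^{11}(θ)|n⟩ = (n cos²θ sin^{n-1}θ - sin^{n+1}θ)|n⟩. -/
import Mathlib


/-- The quantum-scissors map `N¹¹(θ)` on Fock states.
Same two-mode Fock-space model as for the beam splitter: vacuum `v`,
commuting creation operators `ad` (mode i), `bd` (mode j), Fock basis
`ket n m = ad^n bd^m v / √(n! m!)`, beam splitter `U` fixing the vacuum with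
Heisenberg action `U ad U⁻¹ = cosθ•ad + sinθ•bd`,
`U bd U⁻¹ = -sinθ•ad + cosθ•bd`, and coordinate functionals `coeff n m`
dual to the Fock basis.  The map `N¹¹(θ)|ψ⟩_i := ⟨1|_i U |ψ⟩_i|1⟩_j`
satisfies `N¹¹(θ)|n⟩ = (n cos²θ sin^(n-1)θ - sin^(n+1)θ)|n⟩`, i.e. the
mode-j output amplitude `⟨1, m'| U |n, 1⟩` equals that scalar when `m' = n`
and vanishes otherwise. -/
theorem stmt_2 {V : Type*} [AddCommGroup V] [Module ℂ V]
    (ad bd : Module.End ℂ V) (hcomm : ad ∘ₗ bd = bd ∘ₗ ad)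
    (v : V) (U : V ≃ₗ[ℂ] V) (hv : U v = v) (θ : ℝ)
    (hUa : ∀ m : V, U (ad m) =
      (Real.cos θ : ℂ) • ad (U m) + (Real.sin θ : ℂ) • bd (U m))
    (hUb : ∀ m : V, U (bd m) =
      -((Real.sin θ : ℂ) • ad (U m)) + (Real.cos θ : ℂ) • bd (U m))
    (ket : ℕ → ℕ → V)
    (hket : ∀ n m : ℕ, ket n m =
      ((Real.sqrt ((Nat.factorial n : ℝ) * (Nat.factorial m : ℝ)))⁻¹ : ℂ) •
        (ad ^ n) ((bd ^ m) v))
    (coeff : ℕ → ℕ → (V →ₗ[ℂ] ℂ))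
    (hcoeff : ∀ n m n' m' : ℕ,
      coeff n m (ket n' m') = if n = n' ∧ m = m' then 1 else 0) :
    ∀ n m' : ℕ, coeff 1 m' (U (ket n 1)) =
      if m' = n then
        (((n : ℝ) * Real.cos θ ^ 2 * Real.sin θ ^ (n - 1)
          - Real.sin θ ^ (n + 1) : ℝ) : ℂ)
      else 0 := by
  intro n m'
  set c : ℂ := (Real.cos θ : ℂ) with hcdef
  set s : ℂ := (Real.sin θ : ℂ) with hsdef
  have hC : Commute ad bd := by
    show ad * bd = bd * ad
    simpa [Module.End.mul_eq_comp] using hcomm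
  set A : Module.End ℂ V := c • ad + s • bd with hAdef
  have hAapp : ∀ w : V, A w = c • ad w + s • bd w := fun w => rfl
  -- U intertwines powers of ad with powers of A
  have hUpow : ∀ (k : ℕ) (w : V), U ((ad ^ k) w) = (A ^ k) (U w) := by
    intro k
    induction k with
    | zero => intro w; simp
    | succ k ih =>
      intro w
      have h1 : (ad ^ (k+1)) w = (ad ^ k) (ad w) := by rw [pow_succ]; rfl
      have h2 : (A ^ (k+1)) (U w) = (A ^ k) (A (U w)) := by rw [pow_succ]; rfl
      rw [h1, ih, hUa, h2, hAapp]
  have hqsqrt : ∀ a b : ℕ,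
      ((Real.sqrt ((Nat.factorial a : ℝ) * (Nat.factorial b : ℝ))) : ℂ) ≠ 0 := by
    intro a b
    have h : (0:ℝ) < Real.sqrt ((Nat.factorial a : ℝ) * (Nat.factorial b : ℝ)) :=
      Real.sqrt_pos.2 (by positivity)
    exact_mod_cast h.ne'
  have hkv : ∀ a b : ℕ, (ad ^ a) ((bd ^ b) v)
      = ((Real.sqrt ((Nat.factorial a : ℝ) * (Nat.factorial b : ℝ))) : ℂ) • ket a b := by
    intro a b
    rw [hket, smul_smul, mul_inv_cancel₀ (hqsqrt a b), one_smul]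
  have hcoeff' : ∀ a b : ℕ, coeff 1 m' ((ad ^ a) ((bd ^ b) v))
      = ((Real.sqrt ((Nat.factorial a : ℝ) * (Nat.factorial b : ℝ))) : ℂ)
        * (if 1 = a ∧ m' = b then 1 else 0) := by
    intro a b
    rw [hkv, map_smul, hcoeff]
    rfl
  have hbdpow : ∀ (k : ℕ) (w : V), (bd ^ k) (ad w) = ad ((bd ^ k) w) := by
    intro k w
    exact LinearMap.congr_fun (hC.symm.pow_left k) w
  have hCommAB : Commute (c • ad) (s • bd) := (hC.smul_left c).smul_right s
  have hApow : A ^ n = ∑ k ∈ Finset.range (n+1),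
      (c ^ k * s ^ (n - k) * (n.choose k : ℂ)) • (ad ^ k * bd ^ (n - k)) := by
    rw [hAdef, hCommAB.add_pow]
    refine Finset.sum_congr rfl fun k hk => ?_
    rw [smul_pow, smul_pow, smul_mul_smul_comm]
    have h3 : ((c ^ k * s ^ (n-k)) • (ad ^ k * bd ^ (n-k))) * ((n.choose k : ℕ) : Module.End ℂ V)
        = (n.choose k : ℂ) • ((c ^ k * s ^ (n-k)) • (ad ^ k * bd ^ (n-k))) := by
      rw [← (Nat.cast_commute (n.choose k)
          ((c ^ k * s ^ (n-k)) • (ad ^ k * bd ^ (n-k)))).eq, ← nsmul_eq_mul,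
        Nat.cast_smul_eq_nsmul ℂ]
    rw [h3, smul_smul]
    congr 1
    ring
  have hterm1 : ∀ k : ℕ, ((ad ^ k * bd ^ (n-k)) : Module.End ℂ V) (ad v)
      = (ad ^ (k+1)) ((bd ^ (n-k)) v) := by
    intro k
    show (ad ^ k) ((bd ^ (n-k)) (ad v)) = _
    rw [hbdpow, pow_succ]
    rfl
  have hterm2 : ∀ k : ℕ, ((ad ^ k * bd ^ (n-k)) : Module.End ℂ V) (bd v)
      = (ad ^ k) ((bd ^ (n-k+1)) v) := by
    intro k
    show (ad ^ k) ((bd ^ (n-k)) (bd v)) = _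
    rw [pow_succ]
    rfl
  -- first sum
  have hS1 : coeff 1 m' ((A ^ n) (ad v))
      = if m' = n then s ^ n *
          ((Real.sqrt ((Nat.factorial 1 : ℝ) * (Nat.factorial n : ℝ))) : ℂ) else 0 := by
    rw [hApow]
    simp only [LinearMap.sum_apply, LinearMap.smul_apply, map_sum, map_smul, hterm1,
      hcoeff', smul_eq_mul]
    rw [Finset.sum_eq_single 0]
    · by_cases h : m' = n <;> simp [h]
    · intro b hb hb0
      have hng : ¬ (1 = b + 1 ∧ m' = n - b) := by
        rintro ⟨h1, -⟩; omega
      rw [if_neg hng, mul_zero, mul_zero]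
    · intro h
      exact absurd (Finset.mem_range.2 n.succ_pos) h
  -- second sum
  have hS2 : coeff 1 m' ((A ^ n) (bd v))
      = if m' = n ∧ 1 ≤ n then (c * s ^ (n-1) * (n : ℂ)) *
          ((Real.sqrt ((Nat.factorial 1 : ℝ) * (Nat.factorial n : ℝ))) : ℂ) else 0 := by
    rw [hApow]
    simp only [LinearMap.sum_apply, LinearMap.smul_apply, map_sum, map_smul, hterm2,
      hcoeff', smul_eq_mul]
    rcases Nat.eq_zero_or_pos n with hn | hn
    · subst hn
      simp
    · rw [Finset.sum_eq_single 1]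
      · have hnn : n - 1 + 1 = n := by omega
        have h1n : (1:ℕ) ≤ n := hn
        rw [hnn]
        by_cases h : m' = n <;> simp [h, h1n, Nat.choose_one_right]
      · intro b hb hb1
        have hng : ¬ (1 = b ∧ m' = n - b + 1) := by
          rintro ⟨h1, -⟩; omega
        rw [if_neg hng, mul_zero, mul_zero]
      · intro h
        exact absurd (Finset.mem_range.2 (by omega)) h
  -- assemble
  have hmain : coeff 1 m' (U (ket n 1))
      = ((Real.sqrt ((Nat.factorial n : ℝ) * (Nat.factorial 1 : ℝ))) : ℂ)⁻¹ *
        (-(s * coeff 1 m' ((A ^ n) (ad v))) + c * coeff 1 m' ((A ^ n) (bd v))) := by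
    rw [hket n 1, map_smul, map_smul, smul_eq_mul]
    congr 1
    have h1 : U ((ad ^ n) ((bd ^ 1) v)) = (A ^ n) (-(s • ad v) + c • bd v) := by
      rw [pow_one, hUpow, hUb, hv]
    rw [h1, map_add, map_neg, map_smul, map_smul, map_add, map_neg, map_smul, map_smul,
      smul_eq_mul, smul_eq_mul]
  rw [hmain, hS1, hS2]
  rcases eq_or_ne m' n with h | h
  · subst h
    rcases Nat.eq_zero_or_pos m' with hn | hn
    · subst hn
      simp only [hsdef, hcdef]
      norm_num [Nat.factorial]
    · have h1n : (1:ℕ) ≤ m' := hn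
      rw [if_pos rfl, if_pos ⟨rfl, h1n⟩, if_pos rfl]
      have hfac1 : (Nat.factorial 1 : ℝ) = 1 := by norm_num [Nat.factorial]
      rw [hfac1, mul_one, one_mul]
      have hsq : ((Real.sqrt (Nat.factorial m' : ℝ)) : ℂ) ≠ 0 := by
        have h : (0:ℝ) < Real.sqrt (Nat.factorial m' : ℝ) :=
          Real.sqrt_pos.2 (by positivity)
        exact_mod_cast h.ne'
      simp only [hsdef, hcdef]
      push_cast
      field_simp
      ring
  · simp [h]
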